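/- Let (M²,g) be an oriented Riemannian surface and T a symmetric (1,1)-tensor field. Then div T = grad t − Z, where t = trace T and Z is the globally defined vector field given in any local orthonormal frame {X₁,X₂} by Z = ⟨Z₁₂, X₂⟩X₁ − ⟨Z₁₂, X₁⟩X₂ with Z₁₂ = (∇_{X₁}T)(X₂) − (∇_{X₂}T)(X₁). -/

import Mathlib

/-- Abstract model of the `C^∞(M)`-module of (local) vector fields on an
`m`-dimensional Riemannian manifold, equipped with an orthonormal frame `E`,
the Levi-Civita connection `D`, and the derivation action `act` of vector
fields on smooth functions `F`. -/
structure RiemannianFrame (m : ℕ) where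
  F : Type
  V : Type
  [instCommRing : CommRing F]
  [instAlgebra : Algebra ℝ F]
  [instAddCommGroup : AddCommGroup V]
  [instModule : Module F V]
  g : V → V → F
  D : V → V → V
  act : V → F → F
  bracket : V → V → V
  E : Fin m → V
  g_symm : ∀ X Y, g X Y = g Y X
  g_addl : ∀ X Y Z, g (X + Y) Z = g X Z + g Y Z
  g_smull : ∀ (f : F) (X Y : V), g (f • X) Y = f * g X Y
  act_addf : ∀ (X : V) (f h : F), act X (f + h) = act X f + act X h
  act_mulf : ∀ (X : V) (f h : F), act X (f * h) = act X f * h + f * act X h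
  act_addX : ∀ (X Y : V) (f : F), act (X + Y) f = act X f + act Y f
  act_smulX : ∀ (f : F) (X : V) (h : F), act (f • X) h = f * act X h
  act_const : ∀ (X : V) (r : ℝ), act X (algebraMap ℝ F r) = 0
  D_addX : ∀ X Y Z, D (X + Y) Z = D X Z + D Y Z
  D_smulX : ∀ (f : F) (X Y : V), D (f • X) Y = f • D X Y
  D_addY : ∀ X Y Z, D X (Y + Z) = D X Y + D X Z
  D_leibniz : ∀ (X : V) (f : F) (Y : V), D X (f • Y) = act X f • Y + f • D X Y
  metric_compat : ∀ X Y Z, act X (g Y Z) = g (D X Y) Z + g Y (D X Z)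
  torsion_free : ∀ X Y, D X Y - D Y X = bracket X Y
  bracket_act : ∀ (X Y : V) (f : F),
    act (bracket X Y) f = act X (act Y f) - act Y (act X f)
  frame_orthonormal : ∀ i j, g (E i) (E j) = if i = j then 1 else 0
  frame_span : ∀ X, X = ∑ i, g X (E i) • E i

attribute [instance] RiemannianFrame.instCommRing RiemannianFrame.instAlgebra
  RiemannianFrame.instAddCommGroup RiemannianFrame.instModule

namespace RiemannianFrame

variable {m : ℕ} (R : RiemannianFrame m)

/-- The covariant derivative `(∇_X T)(Y)` of a `(1,1)`-tensor field `T`. -/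
def covT (T : R.V → R.V) (X Y : R.V) : R.V := R.D X (T Y) - T (R.D X Y)

/-- `T` is a `(1,1)`-tensor field: it is `C^∞(M)`-linear. -/
def IsTensor (T : R.V → R.V) : Prop :=
  (∀ X Y, T (X + Y) = T X + T Y) ∧ ∀ (f : R.F) (X : R.V), T (f • X) = f • T X

/-- `T` is symmetric with respect to the metric. -/
def IsSymmT (T : R.V → R.V) : Prop := ∀ X Y, R.g (T X) Y = R.g X (T Y)

/-- `T` is a Codazzi tensor field: `(∇_X T)(Y) = (∇_Y T)(X)`. -/
def IsCodazzi (T : R.V → R.V) : Prop := ∀ X Y, R.covT T X Y = R.covT T Y X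

/-- The trace of a `(1,1)`-tensor field. -/
def traceT (T : R.V → R.V) : R.F := ∑ i, R.g (T (R.E i)) (R.E i)

/-- The divergence of a `(1,1)`-tensor field, `div T = Σᵢ (∇_{Eᵢ}T)(Eᵢ)`. -/
def divT (T : R.V → R.V) : R.V := ∑ i, R.covT T (R.E i) (R.E i)

/-- The gradient of a function. -/
def gradF (f : R.F) : R.V := ∑ i, R.act (R.E i) f • R.E i

/-- The divergence of a vector field. -/
def divV (Z : R.V) : R.F := ∑ i, R.g (R.D (R.E i) Z) (R.E i)

/-- The geometric Laplacian `Δ f = -div(grad f)`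
(sign convention matching `Δ^R T = -trace ∇²T`). -/
def lapF (f : R.F) : R.F := - R.divV (R.gradF f)

/-- The pointwise inner product `⟨T,S⟩` of two `(1,1)`-tensor fields. -/
def innerTT (T S : R.V → R.V) : R.F :=
  ∑ i, ∑ j, R.g (T (R.E i)) (R.E j) * R.g (S (R.E i)) (R.E j)

/-- The pointwise squared norm `|T|²`. -/
def normT2 (T : R.V → R.V) : R.F := R.innerTT T T

/-- The pointwise inner product `⟨∇T, ∇S⟩` of the `(0,3)`-tensors `∇T`, `∇S`. -/
def innerNabla (T S : R.V → R.V) : R.F :=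
  ∑ i, R.innerTT (fun Y => R.covT T (R.E i) Y) (fun Y => R.covT S (R.E i) Y)

/-- The pointwise squared norm `|∇T|²`. -/
def normNabla2 (T : R.V → R.V) : R.F := R.innerNabla T T

/-- The second covariant derivative `(∇²T)(X,Y,Z) = (∇_X (∇T))(Y,Z)`. -/
def nabla2 (T : R.V → R.V) (X Y Z : R.V) : R.V :=
  R.D X (R.covT T Y Z) - R.covT T (R.D X Y) Z - R.covT T Y (R.D X Z)

/-- `trace(∇²T)`, as a `(1,1)`-tensor field. -/
def traceNabla2 (T : R.V → R.V) (X : R.V) : R.V := ∑ i, R.nabla2 T (R.E i) (R.E i) X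

/-- The rough Laplacian `Δ^R T = -trace ∇²T`. -/
def roughLap (T : R.V → R.V) (X : R.V) : R.V := - R.traceNabla2 T X

/-- The curvature tensor `R(X,Y)Z = ∇_X∇_Y Z - ∇_Y∇_X Z - ∇_{[X,Y]}Z`. -/
def curv (X Y Z : R.V) : R.V :=
  R.D X (R.D Y Z) - R.D Y (R.D X Z) - R.D (R.bracket X Y) Z

/-- A function is constant iff all its directional derivatives vanish
(`M` is assumed connected). -/
def IsConst (f : R.F) : Prop := ∀ X, R.act X f = 0

end RiemannianFrame

/-- The Gaussian curvature of a surface, `K = ⟨R(E₁,E₂)E₁, E₂⟩`. -/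
def RiemannianFrame.K (R : RiemannianFrame 2) : R.F :=
  R.g (R.curv (R.E 0) (R.E 1) (R.E 0)) (R.E 1)


/-- The vector field `Z = ⟨Z₁₂,W₂⟩W₁ - ⟨Z₁₂,W₁⟩W₂`, where
`Z₁₂ = (∇_{W₁}T)(W₂) - (∇_{W₂}T)(W₁)`, computed in the frame `W₁, W₂`. -/
def Zof (R : RiemannianFrame 2) (T : R.V → R.V) (W1 W2 : R.V) : R.V :=
  R.g (R.covT T W1 W2 - R.covT T W2 W1) W2 • W1 -
    R.g (R.covT T W1 W2 - R.covT T W2 W1) W1 • W2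

/-! The divergence identity is a comparison of components in the frame `E₀, E₁`: since the
connection forms `⟨∇_X Eᵢ, Eⱼ⟩` are skew, differentiating the trace gives
`X t = Σⱼ ⟨(∇_X T)Eⱼ, Eⱼ⟩`, and the symmetry of `∇_X T` turns `grad t - div T` into exactly the
rotated vector `Z`. For well-definedness, both `(W₁, W₂) ↦ Z₁₂` and
`(W₁, W₂) ↦ ⟨v, W₂⟩W₁ - ⟨v, W₁⟩W₂` are alternating and bilinear, so passing to another frame
multiplies `Z` by the square of the determinant of the change of frame. -/

namespace RiemannianFrame

variable {m : ℕ} (R : RiemannianFrame m)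

lemma g_addr (X Y Z : R.V) : R.g X (Y + Z) = R.g X Y + R.g X Z := by
  rw [R.g_symm X, R.g_addl, R.g_symm Y, R.g_symm Z]

lemma g_smulr (f : R.F) (X Y : R.V) : R.g X (f • Y) = f * R.g X Y := by
  rw [R.g_symm X, R.g_smull, R.g_symm Y]

lemma g_subl (X Y Z : R.V) : R.g (X - Y) Z = R.g X Z - R.g Y Z := by
  rw [sub_eq_add_neg, R.g_addl, ← neg_one_smul R.F Y, R.g_smull]
  ring

lemma g_sum_left {ι : Type*} (s : Finset ι) (X : ι → R.V) (Y : R.V) :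
    R.g (∑ i ∈ s, X i) Y = ∑ i ∈ s, R.g (X i) Y :=
  map_sum (AddMonoidHom.mk' (R.g · Y) fun X X' => R.g_addl X X' Y) X s

lemma act_sum {ι : Type*} (X : R.V) (s : Finset ι) (f : ι → R.F) :
    R.act X (∑ i ∈ s, f i) = ∑ i ∈ s, R.act X (f i) :=
  map_sum (AddMonoidHom.mk' (R.act X) (R.act_addf X)) f s

lemma g_sum_smul_E (c : Fin m → R.F) (j : Fin m) :
    R.g (∑ i, c i • R.E i) (R.E j) = c j := by
  simp [g_sum_left, g_smull, frame_orthonormal]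

lemma g_gradF (f : R.F) (j : Fin m) : R.g (R.gradF f) (R.E j) = R.act (R.E j) f :=
  R.g_sum_smul_E _ j

lemma g_D_E_antisymm (X : R.V) (i j : Fin m) :
    R.g (R.D X (R.E i)) (R.E j) = -R.g (R.D X (R.E j)) (R.E i) := by
  have hconst : R.act X (R.g (R.E i) (R.E j)) = 0 := by
    rw [R.frame_orthonormal]
    split_ifs
    · simpa using R.act_const X 1
    · simpa using R.act_const X 0
  rw [R.metric_compat, R.g_symm (R.E i)] at hconst
  exact eq_neg_of_add_eq_zero_left hconst

variable {R} {T : R.V → R.V}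

lemma IsTensor.map_sum (hT : R.IsTensor T) {ι : Type*} (s : Finset ι) (X : ι → R.V) :
    T (∑ i ∈ s, X i) = ∑ i ∈ s, T (X i) :=
  _root_.map_sum (AddMonoidHom.mk' T hT.1) X s

lemma IsTensor.sum_g_D_E_add_g_D_E (hT : R.IsTensor T) (X : R.V) :
    ∑ i, (R.g (T (R.D X (R.E i))) (R.E i) + R.g (T (R.E i)) (R.D X (R.E i))) = 0 := by
  set ω : Fin m → Fin m → R.F := fun i j => R.g (R.D X (R.E i)) (R.E j)
  have hT_D : ∀ i, R.g (T (R.D X (R.E i))) (R.E i) = ∑ j, ω i j * R.g (T (R.E j)) (R.E i) := by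
    intro i
    rw [R.frame_span (R.D X (R.E i)), hT.map_sum, R.g_sum_left]
    simp only [hT.2, R.g_smull]
    rfl
  have hD_T : ∀ i, R.g (T (R.E i)) (R.D X (R.E i)) = ∑ j, ω i j * R.g (T (R.E i)) (R.E j) := by
    intro i
    rw [R.g_symm, R.frame_span (R.D X (R.E i)), R.g_sum_left]
    simp only [R.g_smull, R.g_symm (R.E _)]
    rfl
  simp only [Finset.sum_add_distrib, hT_D, hD_T]
  rw [Finset.sum_comm (f := fun i j => ω i j * R.g (T (R.E i)) (R.E j)), ← Finset.sum_add_distrib]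
  refine Finset.sum_eq_zero fun i _ => ?_
  rw [← Finset.sum_add_distrib]
  refine Finset.sum_eq_zero fun j _ => ?_
  rw [show ω j i = -ω i j from R.g_D_E_antisymm X j i]
  ring

lemma covT_add_left (hT : R.IsTensor T) (X Y Z : R.V) :
    R.covT T (X + Y) Z = R.covT T X Z + R.covT T Y Z := by
  simp only [covT, R.D_addX, hT.1]
  abel

lemma covT_smul_left (hT : R.IsTensor T) (f : R.F) (X Y : R.V) :
    R.covT T (f • X) Y = f • R.covT T X Y := by
  simp only [covT, R.D_smulX, hT.2, smul_sub]

lemma covT_add_right (hT : R.IsTensor T) (X Y Z : R.V) :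
    R.covT T X (Y + Z) = R.covT T X Y + R.covT T X Z := by
  simp only [covT, R.D_addY, hT.1]
  abel

lemma covT_smul_right (hT : R.IsTensor T) (f : R.F) (X Y : R.V) :
    R.covT T X (f • Y) = f • R.covT T X Y := by
  simp only [covT, hT.1, hT.2, R.D_leibniz, smul_sub]
  abel

lemma IsTensor.act_traceT (hT : R.IsTensor T) (X : R.V) :
    R.act X (R.traceT T) = ∑ i, R.g (R.covT T X (R.E i)) (R.E i) := by
  have hD_T : ∀ i, R.D X (T (R.E i)) = R.covT T X (R.E i) + T (R.D X (R.E i)) := fun i => by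
    rw [covT, sub_add_cancel]
  simp only [traceT, R.act_sum, R.metric_compat, hD_T, R.g_addl, add_assoc,
    Finset.sum_add_distrib, hT.sum_g_D_E_add_g_D_E, add_zero]

lemma IsSymmT.g_covT_comm (hT : R.IsSymmT T) (X Y Z : R.V) :
    R.g (R.covT T X Y) Z = R.g (R.covT T X Z) Y := by
  have hYZ := congrArg (R.act X) (show R.g (T Y) Z = R.g (T Z) Y by rw [hT, R.g_symm])
  rw [R.metric_compat, R.metric_compat] at hYZ
  simp only [covT, R.g_subl]
  linear_combination hYZ - hT (R.D X Y) Z + R.g_symm (T Z) (R.D X Y)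
    - hT Y (R.D X Z) + R.g_symm (T (R.D X Z)) Y

lemma covT_sub_covT_smul_add (hT : R.IsTensor T) (a b c d : R.F) (X Y : R.V) :
    R.covT T (a • X + b • Y) (c • X + d • Y) - R.covT T (c • X + d • Y) (a • X + b • Y) =
      (a * d - b * c) • (R.covT T X Y - R.covT T Y X) := by
  simp only [covT_add_left hT, covT_smul_left hT, covT_add_right hT, covT_smul_right hT]
  module

variable (R) in
lemma g_smul_sub_g_smul_smul_add (a b c d : R.F) (v X Y : R.V) :
    R.g v (c • X + d • Y) • (a • X + b • Y) - R.g v (a • X + b • Y) • (c • X + d • Y) =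
      (a * d - b * c) • (R.g v Y • X - R.g v X • Y) := by
  simp only [R.g_addr, R.g_smulr]
  module

end RiemannianFrame

namespace RiemannianFrame

variable {R : RiemannianFrame 2} {T : R.V → R.V}

lemma ext_of_g_E {X Y : R.V} (h0 : R.g X (R.E 0) = R.g Y (R.E 0))
    (h1 : R.g X (R.E 1) = R.g Y (R.E 1)) : X = Y := by
  rw [R.frame_span X, R.frame_span Y, Fin.sum_univ_two, Fin.sum_univ_two, h0, h1]

lemma Zof_smul_add (hT : R.IsTensor T) (a b c d : R.F) (X Y : R.V) :
    Zof R T (a • X + b • Y) (c • X + d • Y) = (a * d - b * c) ^ 2 • Zof R T X Y := by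
  rw [Zof, covT_sub_covT_smul_add hT, R.g_smull, R.g_smull, mul_smul, mul_smul, ← smul_sub,
    g_smul_sub_g_smul_smul_add, Zof, smul_smul, sq]

theorem divT_eq_gradF_sub_Zof (hT : R.IsTensor T) (hTs : R.IsSymmT T) :
    R.divT T = R.gradF (R.traceT T) - Zof R T (R.E 0) (R.E 1) := by
  apply ext_of_g_E <;>
    simp only [divT, Zof, Fin.sum_univ_two, Fin.isValue, R.g_addl, R.g_subl, R.g_smull,
      R.g_gradF, hT.act_traceT, R.frame_orthonormal, one_ne_zero, zero_ne_one, ↓reduceIte,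
      mul_one, mul_zero, sub_zero, zero_sub, neg_sub, add_sub_sub_cancel]
  · linear_combination hTs.g_covT_comm (R.E 1) (R.E 1) (R.E 0)
  · linear_combination hTs.g_covT_comm (R.E 0) (R.E 0) (R.E 1)

end RiemannianFrame

/-- On an oriented Riemannian surface, `div T = grad t - Z` for
any symmetric `(1,1)`-tensor field `T`, with `t = trace T`; moreover `Z` is
well defined, i.e. independent of the choice of positively oriented
orthonormal frame (the change-of-frame matrix having determinant `1`). -/
theorem stmt6 (R : RiemannianFrame 2) (T : R.V → R.V)
    (hT : R.IsTensor T) (hTsymm : R.IsSymmT T) :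
    R.divT T = R.gradF (R.traceT T) - Zof R T (R.E 0) (R.E 1) ∧
      ∀ W1 W2 : R.V,
        R.g W1 W1 = 1 → R.g W2 W2 = 1 → R.g W1 W2 = 0 →
        (∀ X, X = R.g X W1 • W1 + R.g X W2 • W2) →
        R.g W1 (R.E 0) * R.g W2 (R.E 1) - R.g W1 (R.E 1) * R.g W2 (R.E 0) = 1 →
        Zof R T W1 W2 = Zof R T (R.E 0) (R.E 1) := by
  refine ⟨RiemannianFrame.divT_eq_gradF_sub_Zof hT hTsymm, fun W1 W2 _ _ _ _ hdet => ?_⟩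
  rw [R.frame_span W1, R.frame_span W2, Fin.sum_univ_two, Fin.sum_univ_two,
    RiemannianFrame.Zof_smul_add hT, hdet, one_pow, one_smul]
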